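/- In the CARUM model M(▷) on X = {1, ..., n} (the n cyclic shifts of the order 1 ▷ 2 ▷ ... ▷ n), for every set A with ∅ ≠ A ⊊ X and any two distinct elements x, y ∈ A, the sets L(x, A) and L(y, A) cannot both intersect M(▷); that is, at most one element x ∈ A satisfies M(▷) ∩ L(x, A) ≠ ∅. -/

import Mathlib

open scoped Classical

abbrev Pref (X : Type*) := {r : X → X → Prop // IsStrictTotalOrder X r}

variable {X : Type*} [Fintype X] [DecidableEq X]

/-- `≻ ∈ L(x,A)`: `x` is ranked above all other elements of `A` and
below all elements of `X \ A`. -/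
def memL (r : X → X → Prop) (x : X) (A : Finset X) : Prop :=
  x ∈ A ∧ (∀ y ∈ A, y ≠ x → r x y) ∧ ∀ z, z ∉ A → r z x

/-- The 0-1 vector of the random choice rule induced by a single order:
`pVec r (x, A) = 1` iff `x` is `r`-maximal in `A`. -/
noncomputable def pVec (r : X → X → Prop) : X × Finset X → ℝ :=
  fun z => if z.1 ∈ z.2 ∧ ∀ y ∈ z.2, y ≠ z.1 → r z.1 y then 1 else 0

/-- `q_≻` vector: indicator of `≻ ∈ L(x,A)`. -/
noncomputable def qVec (r : X → X → Prop) : X × Finset X → ℝ :=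
  fun z => if memL r z.1 z.2 then 1 else 0

/-- `ν` is a probability distribution over the model `M`. -/
def IsDist (M : Finset (Pref X)) (ν : Pref X → ℝ) : Prop :=
  (∀ r, 0 ≤ ν r) ∧ (∀ r, r ∉ M → ν r = 0) ∧ ∑ r ∈ M, ν r = 1

/-- The random choice rule induced by `ν` over `M`. -/
noncomputable def pRCR (M : Finset (Pref X)) (ν : Pref X → ℝ) : X × Finset X → ℝ :=
  fun z => ∑ r ∈ M, ν r * pVec r.1 z

/-- The model `M` is identified. -/
def Identified (M : Finset (Pref X)) : Prop :=
  ∀ ν ν' : Pref X → ℝ, IsDist M ν → IsDist M ν' → pRCR M ν = pRCR M ν' → ν = ν'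

/-- Edge decomposability. -/
def EdgeDecomposable (M : Finset (Pref X)) : Prop :=
  ∀ N ⊆ M, N.Nonempty →
    ∃ r ∈ N, ∃ (x : X) (A : Finset X), x ∈ A ∧
      ∀ s ∈ N, (memL s.1 x A ↔ s = r)

noncomputable instance : Fintype (Pref X) := Fintype.ofFinite _

/-- The cyclic shift of the natural order on `Fin n` starting at `m`:
`m ≻ m+1 ≻ ⋯ ≻ n-1 ≻ 0 ≻ ⋯ ≻ m-1`. -/
def shiftPref (n : ℕ) [NeZero n] (m : Fin n) : Pref (Fin n) :=
  ⟨fun x y => (x - m).val < (y - m).val,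
   { trichotomous := fun a b => by
       intro h1 h2
       rcases lt_trichotomy (a - m).val (b - m).val with h | h | h
       · exact absurd h h1
       · exact (by have := Fin.ext h; exact sub_left_injective this)
       · exact absurd h h2
     irrefl := fun a => lt_irrefl _
     trans := fun a b c h1 h2 => lt_trans h1 h2 }⟩

/-- The CARUM model: the `n` cyclic shifts of the natural order on `Fin n`. -/
noncomputable def carum (n : ℕ) [NeZero n] : Finset (Pref (Fin n)) :=
  Finset.univ.image (shiftPref n)

lemma fin_sub_one_val {n : ℕ} [NeZero n] (v : Fin n) (h : 1 ≤ v.val) :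
    (v - 1).val = v.val - 1 := by
  have hv := v.is_lt
  have h1 : (1 : Fin n).val = 1 := by
    have : 1 < n := by omega
    simp [Fin.val_one', Nat.mod_eq_of_lt this]
  have h2 : (v - 1).val = (n - (1:Fin n).val + v.val) % n := by rw [Fin.sub_def]
  rw [h1] at h2
  have h3 : n - 1 + v.val = (v.val - 1) + n := by omega
  rw [h3, Nat.add_mod_right, Nat.mod_eq_of_lt (by omega)] at h2
  omega

lemma memL_char {n : ℕ} [NeZero n] {m x : Fin n} {A : Finset (Fin n)}
    (h : memL (shiftPref n m).1 x A) : ∀ w, w ∈ A ↔ (x - m).val ≤ (w - m).val := by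
  obtain ⟨hx, habove, hbelow⟩ := h
  intro w
  constructor
  · intro hw
    rcases eq_or_ne w x with rfl | hne
    · exact le_refl _
    · exact le_of_lt (habove w hw hne)
  · intro hle
    by_contra hw
    exact absurd (hbelow w hw) (not_lt.mpr hle)

/-- `x` is the unique element of `A` whose predecessor is outside `A`. -/
lemma memL_pred {n : ℕ} [NeZero n] {m x : Fin n} {A : Finset (Fin n)}
    (h : memL (shiftPref n m).1 x A) (hA' : A ≠ Finset.univ) :
    x - 1 ∉ A ∧ ∀ w ∈ A, w - 1 ∉ A → w = x := by
  have hc := memL_char h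
  obtain ⟨z, hz⟩ : ∃ z, z ∉ A := by
    by_contra hz
    push_neg at hz
    exact hA' (Finset.eq_univ_iff_forall.mpr hz)
  have ha : 1 ≤ (x - m).val := by
    have := (hc z).not.mp hz
    omega
  refine ⟨?_, ?_⟩
  · rw [hc]
    have : x - 1 - m = (x - m) - 1 := by exact sub_right_comm x 1 m
    rw [this, fin_sub_one_val _ ha]
    omega
  · intro w hw hw1
    have h1 : (x - m).val ≤ (w - m).val := (hc w).mp hw
    have h2 : ¬ (x - m).val ≤ (w - 1 - m).val := (hc _).not.mp hw1
    have he : w - 1 - m = (w - m) - 1 := by exact sub_right_comm w 1 m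
    rw [he, fin_sub_one_val _ (le_trans ha h1)] at h2
    have : w - m = x - m := Fin.ext (by omega)
    have := sub_left_injective this
    exact this

/-- For every proper nonempty menu `A`, at most one alternative `x ∈ A` has
`L(x, A)` intersecting the CARUM model. -/
theorem stmt_19 (n : ℕ) [NeZero n] (A : Finset (Fin n)) (hA : A.Nonempty)
    (hA' : A ≠ Finset.univ) (x y : Fin n) (hx : x ∈ A) (hy : y ∈ A) (hxy : x ≠ y)
    (hrx : ∃ r ∈ carum n, memL r.1 x A) (hry : ∃ r ∈ carum n, memL r.1 y A) :
    False := by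
  obtain ⟨r, hr, hmx⟩ := hrx
  obtain ⟨r', hr', hmy⟩ := hry
  obtain ⟨m, -, rfl⟩ := Finset.mem_image.mp hr
  obtain ⟨m', -, rfl⟩ := Finset.mem_image.mp hr'
  obtain ⟨hx1, hxu⟩ := memL_pred hmx hA'
  obtain ⟨hy1, -⟩ := memL_pred hmy hA'
  exact hxy (hxu y hy hy1).symm
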